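/- In a restricted lattice path, two adjacent peaks (x, charge i) and (y, charge j) with x > y satisfy x - y ≥ 2·min(i,j) + χ(i > j), where χ(i > j) is 1 if i > j and 0 otherwise. -/
import Mathlib


/-- A lattice path in the first quadrant: heights after each step, starting at
height k - i, ending on the x-axis after T steps, with moves
α : (x,y) → (x+1, max 0 (y-1)) and β : (x,y) → (x+1, y+1). -/
structure LPath (k i : ℕ) where
  T : ℕ
  h : ℕ → ℕ
  start : h 0 = k - i
  ends : h T = 0
  step : ∀ t, t < T → h (t + 1) = h t + 1 ∨ h (t + 1) = h t - 1

/-- A peak: a point preceded by a β step and followed by an α step. -/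
def LPath.IsPeak {k i : ℕ} (P : LPath k i) (t : ℕ) : Prop :=
  0 < t ∧ t < P.T ∧ P.h t = P.h (t - 1) + 1 ∧ P.h (t + 1) = P.h t - 1

/-- c is witnessed as a charge bound for the peak at x-coordinate t. -/
def LPath.ChargeW {k i : ℕ} (P : LPath k i) (t c : ℕ) : Prop :=
  c ≤ P.h t ∧ ∃ t' t'' : ℕ, t' < t ∧ t < t'' ∧ t'' ≤ P.T ∧
    P.h t' = P.h t - c ∧ P.h t'' = P.h t - c ∧
    (∀ u, t' < u → u < t'' → P.IsPeak u → P.h u ≤ P.h t) ∧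
    (∀ u, t' < u → u < t'' → P.IsPeak u → P.h u = P.h t → t ≤ u)

/-- The charge of a peak: the largest c witnessed as above. -/
noncomputable def LPath.charge {k i : ℕ} (P : LPath k i) (t : ℕ) : ℕ :=
  sSup {c : ℕ | P.ChargeW t c}

/-- If the charge is nonzero, it is itself witnessed. -/
lemma LPath.charge_mem {k i : ℕ} (P : LPath k i) (t : ℕ) (hc : P.charge t ≠ 0) :
    P.ChargeW t (P.charge t) := by
  have hbdd : BddAbove {c | P.ChargeW t c} := ⟨P.h t, fun c hcw => hcw.1⟩
  rcases Set.eq_empty_or_nonempty {c | P.ChargeW t c} with he | hne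
  · exfalso
    apply hc
    rw [LPath.charge, he, csSup_empty]
    rfl
  · exact Nat.sSup_mem hne hbdd

/-- Lipschitz property of lattice paths. -/
lemma LPath.lip {k i : ℕ} (P : LPath k i) (u : ℕ) :
    ∀ w, u ≤ w → w ≤ P.T →
      P.h u ≤ P.h w + (w - u) ∧ P.h w ≤ P.h u + (w - u) := by
  intro w
  induction w with
  | zero =>
    intro h1 _
    interval_cases u
    simp
  | succ n ih =>
    intro h1 h2
    rcases Nat.lt_or_ge u (n + 1) with hlt | hge
    · have hn := ih (by omega) (by omega)
      have hs := P.step n (by omega)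
      rcases hs with hs | hs <;> omega
    · have : u = n + 1 := by omega
      subst this
      simp

/-- two adjacent peaks with x-coordinates x > y and charges i₀, j₀
satisfy x - y ≥ 2·min(i₀,j₀) + χ(i₀ > j₀). -/
theorem stmt18 (k i : ℕ) (hi : 1 ≤ i) (hik : i ≤ k)
    (P : LPath k i) (hres : ∀ t, P.IsPeak t → P.h t ≤ k - 1)
    (x y : ℕ) (hx : P.IsPeak x) (hy : P.IsPeak y) (hxy : y < x)
    (hadj : ∀ u, y < u → u < x → ¬ P.IsPeak u) :
    2 * min (P.charge x) (P.charge y) +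
        (if P.charge y < P.charge x then 1 else 0) ≤ x - y := by
  rcases Nat.eq_zero_or_pos (P.charge x) with haz | hap
  · rw [haz]
    simp
  rcases Nat.eq_zero_or_pos (P.charge y) with hbz | hbp
  · rw [hbz, min_zero]
    split_ifs <;> omega
  -- both charges positive: get witnesses
  obtain ⟨hax, tx', tx'', hx1, hx2, hx3, hx4, hx5, hx6, hx7⟩ :=
    P.charge_mem x (by omega)
  obtain ⟨hby, ty', ty'', hy1, hy2, hy3, hy4, hy5, hy6, hy7⟩ :=
    P.charge_mem y (by omega)
  set a := P.charge x with ha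
  set b := P.charge y with hb
  have hxT : x < P.T := hx.2.1
  -- valley between y and x
  obtain ⟨s, hsmem, hmin⟩ :=
    (Finset.Icc y x).exists_min_image P.h ⟨y, by simp [le_of_lt hxy]⟩
  rw [Finset.mem_Icc] at hsmem
  obtain ⟨hys, hsx⟩ := hsmem
  have hvy : P.h s ≤ P.h y := hmin y (by simp [le_of_lt hxy])
  have hvx : P.h s ≤ P.h x := hmin x (by simp [le_of_lt hxy])
  have H1 : P.h y ≤ P.h s + (s - y) := (P.lip y s hys (by omega)).1
  have H2 : P.h x ≤ P.h s + (x - s) := (P.lip s x hsx (by omega)).2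
  -- case analysis on the positions of the witnesses
  have hcaseA : y ≤ tx' → P.h s + a ≤ P.h x := by
    intro h
    have : P.h s ≤ P.h tx' := hmin tx' (Finset.mem_Icc.mpr ⟨h, by omega⟩)
    omega
  have hcaseB : tx' < y → P.h y < P.h x := by
    intro h
    have h6 := hx6 y h (by omega) hy
    have h7 := hx7 y h (by omega) hy
    omega
  have hcaseC : ty'' ≤ x → P.h s + b ≤ P.h y := by
    intro h
    have : P.h s ≤ P.h ty'' := hmin ty'' (Finset.mem_Icc.mpr ⟨by omega, h⟩)
    omega
  have hcaseD : x < ty'' → P.h x ≤ P.h y := by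
    intro h
    exact hy6 x (by omega) h hx
  rcases Nat.lt_or_ge b a with hba | hba
  · rw [if_pos hba, min_eq_right (le_of_lt hba)]
    rcases Nat.lt_or_ge tx' y with h | h
    · -- h y < h x, hence ty'' ≤ x, depth ≥ b on the y side, ≥ b+1 on the x side
      have hB := hcaseB h
      have hC : P.h s + b ≤ P.h y := by
        rcases Nat.lt_or_ge x ty'' with h' | h'
        · exact absurd (hcaseD h') (by omega)
        · exact hcaseC h'
      omega
    · have hA := hcaseA h
      rcases Nat.lt_or_ge x ty'' with h' | h'
      · have hD := hcaseD h'
        omega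
      · have hC := hcaseC h'
        omega
  · rw [if_neg (by omega), min_eq_left hba]
    rcases Nat.lt_or_ge tx' y with h | h
    · have hB := hcaseB h
      have hC : P.h s + b ≤ P.h y := by
        rcases Nat.lt_or_ge x ty'' with h' | h'
        · exact absurd (hcaseD h') (by omega)
        · exact hcaseC h'
      omega
    · have hA := hcaseA h
      rcases Nat.lt_or_ge x ty'' with h' | h'
      · have hD := hcaseD h'
        omega
      · have hC := hcaseC h'
        omega
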